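/- The L_EA-schema E′₂, consisting of all universal closures of K(φ→ψ) → Kφ → Kψ for L_EA-formulas φ, ψ with depth(φ) ≤ depth(ψ), is upgeneric: for every L_EA-theory T ⊇ E′₂, 𝓜_{T^⊕} ⊨ (E′₂)^⊕. -/

import Mathlib

namespace FCT

/-- Terms of the language `L_PA = (0, S, +, ·)`.  Variables are indexed by `ℕ`. -/
inductive Term : Type where
  | var : ℕ → Term
  | zero : Term
  | succ : Term → Term
  | add : Term → Term → Term
  | mul : Term → Term → Term

/-- Formulas of `L_PA` extended by a family of unary operators indexed by `Op`
(the base logic).  `op K φ` is the formula `Kφ`. -/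
inductive Formula (Op : Type) : Type where
  | eq : Term → Term → Formula Op
  | imp : Formula Op → Formula Op → Formula Op
  | not : Formula Op → Formula Op
  | all : ℕ → Formula Op → Formula Op
  | op : Op → Formula Op → Formula Op

/-- The ordinals below `ω·ω`, encoded as pairs: `(a, b)` represents `ω·a + b`,
with the lexicographic order. -/
abbrev Ord2 : Type := ℕ ×ₗ ℕ

/-- The ordinal `ω·a + b` as an element of `Ord2`. -/
def omul (a b : ℕ) : Ord2 := toLex (a, b)

/-- Formulas of `L_EA`: one operator `K`. -/
abbrev LEA : Type := Formula Unit

/-- Formulas of `L_{ω·ω}`: operators `K^α` for `α < ω·ω`. -/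
abbrev LOO : Type := Formula Ord2

/-- `Kφ` in `L_EA`. -/
def KK (φ : LEA) : LEA := .op () φ

/-- Variables occurring in a term. -/
def Term.vars : Term → Set ℕ
  | .var x => {x}
  | .zero => ∅
  | .succ t => t.vars
  | .add t u => t.vars ∪ u.vars
  | .mul t u => t.vars ∪ u.vars

/-- Free variables of a formula (`FV(Kφ) = FV(φ)`). -/
def Formula.free {Op : Type} : Formula Op → Set ℕ
  | .eq t u => t.vars ∪ u.vars
  | .imp φ ψ => φ.free ∪ ψ.free
  | .not φ => φ.free
  | .all x φ => φ.free \ {x}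
  | .op _ φ => φ.free

/-- A sentence is a formula with no free variables. -/
def Formula.IsSentence {Op : Type} (φ : Formula Op) : Prop := φ.free = ∅

/-- A theory is a set of sentences. -/
def IsTheory {Op : Type} (T : Set (Formula Op)) : Prop := ∀ φ ∈ T, φ.IsSentence

/-- Substitution of the term `u` for the variable `x` in a term. -/
def Term.subst (x : ℕ) (u : Term) : Term → Term
  | .var y => if y = x then u else .var y
  | .zero => .zero
  | .succ t => .succ (Term.subst x u t)
  | .add t₁ t₂ => .add (Term.subst x u t₁) (Term.subst x u t₂)
  | .mul t₁ t₂ => .mul (Term.subst x u t₁) (Term.subst x u t₂)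

/-- Substitution `φ(x|u)` of the term `u` for all free occurrences of `x` in `φ`. -/
def Formula.subst {Op : Type} (x : ℕ) (u : Term) : Formula Op → Formula Op
  | .eq t₁ t₂ => .eq (Term.subst x u t₁) (Term.subst x u t₂)
  | .imp φ ψ => .imp (Formula.subst x u φ) (Formula.subst x u ψ)
  | .not φ => .not (Formula.subst x u φ)
  | .all y φ => if y = x then .all y φ else .all y (Formula.subst x u φ)
  | .op K φ => .op K (Formula.subst x u φ)

/-- The term `u` is substitutable for the variable `x` in the formula. -/
def Formula.Substitutable {Op : Type} (x : ℕ) (u : Term) : Formula Op → Prop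
  | .eq _ _ => True
  | .imp φ ψ => φ.Substitutable x u ∧ ψ.Substitutable x u
  | .not φ => φ.Substitutable x u
  | .all y φ => x = y ∨ x ∉ φ.free ∨ (y ∉ u.vars ∧ φ.Substitutable x u)
  | .op _ φ => φ.Substitutable x u

/-- Matching of two variables relative to a list of pairs of renamed bound variables. -/
def varMatch : List (ℕ × ℕ) → ℕ → ℕ → Prop
  | [], x, y => x = y
  | (a, b) :: ρ, x, y => (x = a ∧ y = b) ∨ (x ≠ a ∧ y ≠ b ∧ varMatch ρ x y)

/-- Alphabetic matching of terms relative to a list of pairs of renamed bound variables. -/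
def Term.alpha (ρ : List (ℕ × ℕ)) : Term → Term → Prop
  | .var x, .var y => varMatch ρ x y
  | .zero, .zero => True
  | .succ t, .succ u => t.alpha ρ u
  | .add t₁ t₂, .add u₁ u₂ => t₁.alpha ρ u₁ ∧ t₂.alpha ρ u₂
  | .mul t₁ t₂, .mul u₁ u₂ => t₁.alpha ρ u₁ ∧ t₂.alpha ρ u₂
  | _, _ => False

/-- Alphabetic matching of formulas relative to a list of pairs of renamed bound variables. -/
def Formula.alpha {Op : Type} (ρ : List (ℕ × ℕ)) : Formula Op → Formula Op → Prop
  | .eq t₁ t₂, .eq u₁ u₂ => t₁.alpha ρ u₁ ∧ t₂.alpha ρ u₂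
  | .imp φ₁ φ₂, .imp ψ₁ ψ₂ => φ₁.alpha ρ ψ₁ ∧ φ₂.alpha ρ ψ₂
  | .not φ, .not ψ => φ.alpha ρ ψ
  | .all x φ, .all y ψ => φ.alpha ((x, y) :: ρ) ψ
  | .op K φ, .op K' ψ => K = K' ∧ φ.alpha ρ ψ
  | _, _ => False

/-- `ψ` is an alphabetic variant of `φ`: it is obtained from `φ` by renaming
bound variables while respecting the binding of the quantifiers. -/
def Formula.AlphaVariant {Op : Type} (φ ψ : Formula Op) : Prop := φ.alpha [] ψ

/-- The data of a structure for the base logic over `L_PA` extended by the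
operators `Op`: a first-order part together with a truth valuation
`opSat K φ s` ("`M ⊨ Kφ[s]`") for operator-prefixed formulas. -/
structure PreStruc (Op : Type) : Type 1 where
  U : Type
  zero : U
  succ : U → U
  add : U → U → U
  mul : U → U → U
  opSat : Op → Formula Op → (ℕ → U) → Prop

/-- Evaluation of terms. -/
def Term.eval {Op : Type} (M : PreStruc Op) (s : ℕ → M.U) : Term → M.U
  | .var x => s x
  | .zero => M.zero
  | .succ t => M.succ (t.eval M s)
  | .add t u => M.add (t.eval M s) (u.eval M s)
  | .mul t u => M.mul (t.eval M s) (u.eval M s)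

/-- Satisfaction `M ⊨ φ[s]`: as in first-order logic on non-operator formulas,
and given by `opSat` on operator-prefixed formulas. -/
def Sat {Op : Type} (M : PreStruc Op) : Formula Op → (ℕ → M.U) → Prop
  | .eq t u, s => t.eval M s = u.eval M s
  | .imp φ ψ, s => Sat M φ s → Sat M ψ s
  | .not φ, s => ¬ Sat M φ s
  | .all x φ, s => ∀ a : M.U, Sat M φ (Function.update s x a)
  | .op K φ, s => M.opSat K φ s

/-- `M` is a genuine structure of the base logic: its operator valuation
(1) depends only on the values of the assignment on the free variables,
(2) is invariant under renaming of bound variables, and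
(3) satisfies weak substitution. -/
def IsStruc {Op : Type} (M : PreStruc Op) : Prop :=
  (∀ (K : Op) (φ : Formula Op) (s t : ℕ → M.U),
      (∀ x ∈ φ.free, s x = t x) → (M.opSat K φ s ↔ M.opSat K φ t)) ∧
  (∀ (K : Op) (φ ψ : Formula Op) (s : ℕ → M.U),
      φ.AlphaVariant ψ → (M.opSat K φ s ↔ M.opSat K ψ s)) ∧
  (∀ (K : Op) (φ : Formula Op) (x y : ℕ) (s : ℕ → M.U),
      φ.Substitutable x (.var y) →
      (M.opSat K (φ.subst x (.var y)) s ↔ M.opSat K φ (Function.update s x (s y))))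

/-- A formula is valid if it holds in every structure under every assignment. -/
def Valid {Op : Type} (φ : Formula Op) : Prop :=
  ∀ M : PreStruc Op, IsStruc M → ∀ s : ℕ → M.U, Sat M φ s

/-- `T ⊨ φ`: every structure satisfying all members of `T` (under every
assignment) satisfies `φ` under every assignment. -/
def Models {Op : Type} (T : Set (Formula Op)) (φ : Formula Op) : Prop :=
  ∀ M : PreStruc Op, IsStruc M → (∀ ψ ∈ T, ∀ s : ℕ → M.U, Sat M ψ s) →
    ∀ s : ℕ → M.U, Sat M φ s

/-- `M ⊨ T`. -/
def SatTheory {Op : Type} (M : PreStruc Op) (T : Set (Formula Op)) : Prop :=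
  ∀ φ ∈ T, ∀ s : ℕ → M.U, Sat M φ s

/-- The numeral `n̄`. -/
def numeral : ℕ → Term
  | 0 => .zero
  | n + 1 => .succ (numeral n)

/-- Helper for `φ^s`: replace every free occurrence of a variable `x` not in the
list `B` of bound variables by the numeral for `s x`. -/
def Term.numSub (s : ℕ → ℕ) (B : List ℕ) : Term → Term
  | .var x => if x ∈ B then .var x else numeral (s x)
  | .zero => .zero
  | .succ t => .succ (t.numSub s B)
  | .add t u => .add (t.numSub s B) (u.numSub s B)
  | .mul t u => .mul (t.numSub s B) (u.numSub s B)

/-- Helper for `φ^s` (carrying the list of bound variables). -/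
def Formula.numSub {Op : Type} (s : ℕ → ℕ) : List ℕ → Formula Op → Formula Op
  | B, .eq t u => .eq (t.numSub s B) (u.numSub s B)
  | B, .imp φ ψ => .imp (φ.numSub s B) (ψ.numSub s B)
  | B, .not φ => .not (φ.numSub s B)
  | B, .all x φ => .all x (φ.numSub s (x :: B))
  | B, .op K φ => .op K (φ.numSub s B)

/-- `φ^s`: the sentence obtained by substituting the numeral for `s x` for each
free occurrence of each variable `x` in `φ`. -/
def assignSub {Op : Type} (s : ℕ → ℕ) (φ : Formula Op) : Formula Op :=
  φ.numSub s []

/-- The intended structure `𝒩_T` of an `L_EA`-theory `T`: standard first-order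
part and `𝒩_T ⊨ Kφ[s]` iff `T ⊨ φ^s`. -/
def NStruc (T : Set LEA) : PreStruc Unit where
  U := ℕ
  zero := 0
  succ := Nat.succ
  add := (· + ·)
  mul := (· * ·)
  opSat := fun _ φ s => Models T (assignSub s φ)

/-- `T` is true: `𝒩_T ⊨ T`. -/
def TheoryTrue (T : Set LEA) : Prop := SatTheory (NStruc T) T

/-- `On(φ)`: the set of `α < ω·ω` such that `K^α` occurs in `φ`. -/
def Formula.On : LOO → Set Ord2
  | .eq _ _ => ∅
  | .imp φ ψ => φ.On ∪ ψ.On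
  | .not φ => φ.On
  | .all _ φ => φ.On
  | .op α φ => insert α φ.On

/-- `T ∩ α`: the members of `T` all of whose superscripts are `< α`. -/
def cut (T : Set LOO) (α : Ord2) : Set LOO := {φ | φ ∈ T ∧ ∀ β ∈ φ.On, β < α}

/-- The intended structure `𝓜_T` of an `L_{ω·ω}`-theory `T`: standard
first-order part and `𝓜_T ⊨ K^αφ[s]` iff `T∩α ⊨ φ^s`. -/
def MStruc (T : Set LOO) : PreStruc Ord2 where
  U := ℕ
  zero := 0
  succ := Nat.succ
  add := (· + ·)
  mul := (· * ·)
  opSat := fun α φ s => Models (cut T α) (assignSub s φ)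

/-- The least element of a set `A ⊆ ω·ω` (junk value if `A` is empty):
first minimize the `ω`-coefficient, then the finite part. -/
noncomputable def leastIn (A : Set Ord2) : Ord2 :=
  let a := sInf {a : ℕ | ∃ b : ℕ, toLex (a, b) ∈ A}
  toLex (a, sInf {b : ℕ | toLex (a, b) ∈ A})

/-- The stratifier given by `X ⊆ ω·ω`: fixes atomic formulas, commutes with
`→`, `¬`, `∀`, and sends `Kφ₀` to `K^α φ₀⁺` where `α` is the least element of
`X \ On(φ₀⁺)`. -/
noncomputable def stratify (X : Set Ord2) : LEA → LOO
  | .eq t u => .eq t u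
  | .imp φ ψ => .imp (stratify X φ) (stratify X ψ)
  | .not φ => .not (stratify X φ)
  | .all x φ => .all x (stratify X φ)
  | .op _ φ => .op (leastIn (X \ (stratify X φ).On)) (stratify X φ)

/-- A stratifier is the map given by some infinite `X ⊆ ω·ω`. -/
def IsStratifier (f : LEA → LOO) : Prop :=
  ∃ X : Set Ord2, X.Infinite ∧ f = stratify X

/-- `T^⊕ = { φ⁺ : φ ∈ T, ⁺ a stratifier }`. -/
def oplus (T : Set LEA) : Set LOO :=
  {ψ | ∃ φ ∈ T, ∃ f : LEA → LOO, IsStratifier f ∧ ψ = f φ}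

/-- The veristratifier: the stratifier given by `X = {ω·1, ω·2, ω·3, …}`. -/
noncomputable def veristratifier : LEA → LOO :=
  stratify {α : Ord2 | ∃ n : ℕ, α = omul (n + 1) 0}

/-- `φ⁻`: change every `K^α` into `K`. -/
def Formula.down : LOO → LEA
  | .eq t u => .eq t u
  | .imp φ ψ => .imp φ.down ψ.down
  | .not φ => .not φ.down
  | .all x φ => .all x φ.down
  | .op _ φ => .op () φ.down

/-- `M⁺` for an `L_{ω·ω}`-structure `M` and a stratifier `⁺`: same universe and
`L_PA`-part, and `M⁺ ⊨ Kφ[s]` iff `M ⊨ (Kφ)⁺[s]`. -/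
def upStruc (M : PreStruc Ord2) (f : LEA → LOO) : PreStruc Unit where
  U := M.U
  zero := M.zero
  succ := M.succ
  add := M.add
  mul := M.mul
  opSat := fun _ φ s => Sat M (f (.op () φ)) s

/-- `M⁻` for an `L_EA`-structure `M`: same universe and `L_PA`-part, and
`M⁻ ⊨ K^αφ[s]` iff `M ⊨ K(φ⁻)[s]`. -/
def downStruc (M : PreStruc Unit) : PreStruc Ord2 where
  U := M.U
  zero := M.zero
  succ := M.succ
  add := M.add
  mul := M.mul
  opSat := fun _ φ s => Sat M (.op () φ.down) s

open Classical in
/-- `h(φ)`: replace every occurrence of `K^α` with `α ∈ X` by `K^{h(α)}`. -/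
noncomputable def mapOps (X : Set Ord2) (h : Ord2 → Ord2) : LOO → LOO
  | .eq t u => .eq t u
  | .imp φ ψ => .imp (mapOps X h φ) (mapOps X h ψ)
  | .not φ => .not (mapOps X h φ)
  | .all x φ => .all x (mapOps X h φ)
  | .op α φ => .op (if α ∈ X then h α else α) (mapOps X h φ)

/-- `h : X → ω·ω` is order preserving. -/
def OrdPresOn (X : Set Ord2) (h : Ord2 → Ord2) : Prop :=
  ∀ a ∈ X, ∀ b ∈ X, a < b → h a < h b

/-- A uniform `L_{ω·ω}`-theory. -/
def Uniform (T : Set LOO) : Prop :=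
  ∀ (X : Set Ord2) (h : Ord2 → Ord2), OrdPresOn X h →
    ∀ φ ∈ T, φ.On ⊆ X → mapOps X h φ ∈ T

/-- `h(M)`: same universe and `L_PA`-part as `M`, and
`h(M) ⊨ K^αφ[s]` iff `M ⊨ h(K^αφ)[s]`. -/
noncomputable def hStruc (X : Set Ord2) (h : Ord2 → Ord2) (M : PreStruc Ord2) :
    PreStruc Ord2 where
  U := M.U
  zero := M.zero
  succ := M.succ
  add := M.add
  mul := M.mul
  opSat := fun α φ s => Sat M (mapOps X h (.op α φ)) s

/-- The depth of nesting of the operators. -/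
def Formula.depth {Op : Type} : Formula Op → ℕ
  | .eq _ _ => 0
  | .imp φ ψ => max φ.depth ψ.depth
  | .not φ => φ.depth
  | .all _ φ => φ.depth
  | .op _ φ => φ.depth + 1

/-- `∀x₁ ⋯ ∀xₙ φ`. -/
def Formula.alls {Op : Type} : List ℕ → Formula Op → Formula Op
  | [], φ => φ
  | x :: l, φ => .all x (Formula.alls l φ)

/-- `ψ` is a universal closure of `φ`: a sentence of the form `∀x₁ ⋯ ∀xₙ φ`. -/
def IsUClosure {Op : Type} (φ ψ : Formula Op) : Prop :=
  ψ.IsSentence ∧ ∃ l : List ℕ, ψ = Formula.alls l φ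

/-- The schema `E₁`: universal closures of `Kφ`, `φ` valid. -/
def E1 : Set LEA := {χ | ∃ φ : LEA, Valid φ ∧ IsUClosure (KK φ) χ}

/-- The schema `E₂`: universal closures of `K(φ→ψ) → Kφ → Kψ`. -/
def E2 : Set LEA :=
  {χ | ∃ φ ψ : LEA, IsUClosure (.imp (KK (.imp φ ψ)) (.imp (KK φ) (KK ψ))) χ}

/-- The schema `E′₂`: universal closures of `K(φ→ψ) → Kφ → Kψ` with
`depth(φ) ≤ depth(ψ)`. -/
def E2' : Set LEA :=
  {χ | ∃ φ ψ : LEA, φ.depth ≤ ψ.depth ∧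
    IsUClosure (.imp (KK (.imp φ ψ)) (.imp (KK φ) (KK ψ))) χ}

/-- The schema `E₃`: universal closures of `Kφ → φ`. -/
def E3 : Set LEA := {χ | ∃ φ : LEA, IsUClosure (.imp (KK φ) φ) χ}

/-- The Assigned Validity schema: all `φ^s` with `φ` valid, `s : ℕ → ℕ`. -/
def AssignedValidity : Set LEA :=
  {χ | ∃ (φ : LEA) (s : ℕ → ℕ), Valid φ ∧ χ = assignSub s φ}

/-- `K(T₀) = { Kφ : φ ∈ T₀ }`. -/
def KSet (T : Set LEA) : Set LEA := {χ | ∃ φ ∈ T, χ = KK φ}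

/-- Membership in the smallest `K`-closed set containing `S`. -/
inductive KClosureMem (S : Set LEA) : LEA → Prop
  | base {φ : LEA} : φ ∈ S → KClosureMem S φ
  | k {φ : LEA} : KClosureMem S φ → KClosureMem S (KK φ)

/-- The smallest `K`-closed theory containing `S`. -/
def KClosure (S : Set LEA) : Set LEA := {φ | KClosureMem S φ}

/-- `T₀` is upgeneric: `𝓜_{T^⊕} ⊨ T₀^⊕` for every `L_EA`-theory `T ⊇ T₀`. -/
def Upgeneric (T₀ : Set LEA) : Prop :=
  ∀ T : Set LEA, IsTheory T → T₀ ⊆ T → SatTheory (MStruc (oplus T)) (oplus T₀)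

/-- A concrete Gödel numbering of terms. -/
def encodeTerm : Term → ℕ
  | .var x => Nat.pair 0 x
  | .zero => Nat.pair 1 0
  | .succ t => Nat.pair 2 (encodeTerm t)
  | .add t u => Nat.pair 3 (Nat.pair (encodeTerm t) (encodeTerm u))
  | .mul t u => Nat.pair 4 (Nat.pair (encodeTerm t) (encodeTerm u))

/-- A concrete Gödel numbering of `L_EA`-formulas. -/
def encodeLEA : LEA → ℕ
  | .eq t u => Nat.pair 0 (Nat.pair (encodeTerm t) (encodeTerm u))
  | .imp φ ψ => Nat.pair 1 (Nat.pair (encodeLEA φ) (encodeLEA ψ))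
  | .not φ => Nat.pair 2 (encodeLEA φ)
  | .all x φ => Nat.pair 3 (Nat.pair x (encodeLEA φ))
  | .op _ φ => Nat.pair 4 (encodeLEA φ)

/-- `T` is recursively enumerable: the set of Gödel numbers of its members is r.e. -/
def RETheory (T : Set LEA) : Prop := REPred fun n => ∃ φ ∈ T, encodeLEA φ = n

/-- `T₀` is r.e.-upgeneric: `T₀` is r.e. and `𝓜_{T^⊕} ⊨ T₀^⊕` for every r.e.
`L_EA`-theory `T ⊇ T₀`. -/
def REUpgeneric (T₀ : Set LEA) : Prop :=
  RETheory T₀ ∧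
    ∀ T : Set LEA, IsTheory T → RETheory T → T₀ ⊆ T →
      SatTheory (MStruc (oplus T)) (oplus T₀)

/-! The stratified instance of `K(φ → ψ) → Kφ → Kψ` reads
`K^γ(φ⁺ → ψ⁺) → K^β φ⁺ → K^γ ψ⁺`, where the superscripts of `φ⁺` are the first `depth φ`
elements of `X`, `β` is the next one, and likewise `γ` for `ψ`. When `depth φ ≤ depth ψ` the
antecedent `φ → ψ` has the same superscripts as `ψ`, and `β ≤ γ`, so `T^⊕ ∩ β ⊆ T^⊕ ∩ γ`; then
`T^⊕ ∩ γ` proves both `φ⁺ → ψ⁺` and `φ⁺`, hence `ψ⁺`. -/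

lemma leastIn_le {A : Set Ord2} {a : Ord2} (ha : a ∈ A) : leastIn A ≤ a := by
  set c := sInf {c : ℕ | ∃ d : ℕ, toLex (c, d) ∈ A}
  have hc : c ≤ (ofLex a).1 := Nat.sInf_le ⟨(ofLex a).2, ha⟩
  change toLex _ ≤ toLex (ofLex a)
  rcases hc.lt_or_eq with hlt | heq
  · exact (Prod.Lex.lt_iff.mpr (Or.inl hlt)).le
  · refine Prod.Lex.le_iff.mpr (Or.inr ⟨heq, Nat.sInf_le ?_⟩)
    change toLex (c, (ofLex a).2) ∈ A
    rwa [heq]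

lemma leastIn_mem {A : Set Ord2} (h : A.Nonempty) : leastIn A ∈ A := by
  obtain ⟨a, ha⟩ := h
  obtain ⟨d, hd⟩ := Nat.sInf_mem (⟨(ofLex a).1, (ofLex a).2, ha⟩ :
    {c : ℕ | ∃ d : ℕ, toLex (c, d) ∈ A}.Nonempty)
  exact Nat.sInf_mem (⟨d, hd⟩ :
    {d : ℕ | toLex (sInf {c : ℕ | ∃ d : ℕ, toLex (c, d) ∈ A}, d) ∈ A}.Nonempty)

lemma leastIn_anti {A B : Set Ord2} (hAB : A ⊆ B) (hA : A.Nonempty) :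
    leastIn B ≤ leastIn A :=
  leastIn_le (hAB (leastIn_mem hA))

noncomputable def firstElems (X : Set Ord2) : ℕ → Set Ord2
  | 0 => ∅
  | n + 1 => insert (leastIn (X \ firstElems X n)) (firstElems X n)

lemma firstElems_mono (X : Set Ord2) {n m : ℕ} (h : n ≤ m) :
    firstElems X n ⊆ firstElems X m := by
  induction h with
  | refl => exact subset_rfl
  | step _ ih => exact ih.trans (Set.subset_insert _ _)

lemma firstElems_finite (X : Set Ord2) (n : ℕ) : (firstElems X n).Finite := by
  induction n with
  | zero => exact Set.finite_empty
  | succ n ih => exact ih.insert _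

lemma leastIn_diff_firstElems_mono {X : Set Ord2} (hX : X.Infinite) {n m : ℕ} (h : n ≤ m) :
    leastIn (X \ firstElems X n) ≤ leastIn (X \ firstElems X m) :=
  leastIn_anti (Set.sdiff_subset_sdiff_right (firstElems_mono X h))
    (hX.sdiff (firstElems_finite X m)).nonempty

lemma On_stratify (X : Set Ord2) (φ : LEA) :
    (stratify X φ).On = firstElems X φ.depth := by
  induction φ with
  | eq t u => rfl
  | imp φ ψ ihφ ihψ =>
      change (stratify X φ).On ∪ (stratify X ψ).On = firstElems X (max φ.depth ψ.depth)
      rw [ihφ, ihψ]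
      rcases le_total φ.depth ψ.depth with h | h
      · rw [Set.union_eq_self_of_subset_left (firstElems_mono X h), max_eq_right h]
      · rw [Set.union_eq_self_of_subset_right (firstElems_mono X h), max_eq_left h]
  | not φ ih => exact ih
  | all x φ ih => exact ih
  | op K φ ih =>
      change insert (leastIn (X \ (stratify X φ).On)) (stratify X φ).On = _
      rw [ih]
      rfl

lemma stratify_KK (X : Set Ord2) (φ : LEA) :
    stratify X (KK φ) = .op (leastIn (X \ firstElems X φ.depth)) (stratify X φ) := by
  rw [← On_stratify]
  rfl

lemma stratify_alls (X : Set Ord2) (l : List ℕ) (φ : LEA) :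
    stratify X (Formula.alls l φ) = Formula.alls l (stratify X φ) := by
  induction l with
  | nil => rfl
  | cons x l ih => exact congrArg (Formula.all x) ih

lemma sat_alls {Op : Type} {M : PreStruc Op} {φ : Formula Op} (h : ∀ s, Sat M φ s)
    (l : List ℕ) (s : ℕ → M.U) : Sat M (Formula.alls l φ) s := by
  induction l generalizing s with
  | nil => exact h s
  | cons x l ih => exact fun _ => ih _

lemma Models.mono {Op : Type} {T T' : Set (Formula Op)} {φ : Formula Op} (hT : T ⊆ T')
    (h : Models T φ) : Models T' φ :=
  fun M hM hMT => h M hM fun ψ hψ => hMT ψ (hT hψ)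

lemma Models.mp {Op : Type} {T : Set (Formula Op)} {φ ψ : Formula Op}
    (hφψ : Models T (.imp φ ψ)) (hφ : Models T φ) : Models T ψ :=
  fun M hM hMT s => hφψ M hM hMT s (hφ M hM hMT s)

lemma cut_mono (T : Set LOO) {α β : Ord2} (h : α ≤ β) : cut T α ⊆ cut T β :=
  fun _ hφ => ⟨hφ.1, fun δ hδ => (hφ.2 δ hδ).trans_le h⟩

lemma sat_MStruc_distrib (T : Set LOO) (φ ψ : LOO) {α β : Ord2} (h : β ≤ α) (s : ℕ → ℕ) :
    Sat (MStruc T) (.imp (.op α (.imp φ ψ)) (.imp (.op β φ) (.op α ψ))) s :=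
  fun hφψ hφ => Models.mp hφψ (hφ.mono (cut_mono T h))

/-- The schema `E′₂` is upgeneric: for every `L_EA`-theory `T ⊇ E′₂`,
`𝓜_{T^⊕} ⊨ (E′₂)^⊕`. -/
theorem E2'_upgeneric : Upgeneric E2' := by
  intro T _ _ χ hχ
  obtain ⟨χ₀, ⟨φ, ψ, hdepth, -, l, rfl⟩, f, ⟨X, hX, rfl⟩, rfl⟩ := hχ
  have hinst : stratify X (.imp (KK (.imp φ ψ)) (.imp (KK φ) (KK ψ))) =
      .imp (.op (leastIn (X \ firstElems X ψ.depth)) (.imp (stratify X φ) (stratify X ψ)))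
        (.imp (.op (leastIn (X \ firstElems X φ.depth)) (stratify X φ))
          (.op (leastIn (X \ firstElems X ψ.depth)) (stratify X ψ))) := by
    have hmax : (Formula.imp φ ψ).depth = ψ.depth := max_eq_right hdepth
    simp only [stratify, stratify_KK, hmax]
  rw [stratify_alls, hinst]
  exact sat_alls (sat_MStruc_distrib _ _ _ (leastIn_diff_firstElems_mono hX hdepth)) l

end FCT
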